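/- For every k ≥ 1 there exists a k-restricted Fitch map ε (on X = {a,b,c,d} with |M| = k+1 colors) that contains an induced submap ε' (on X' = {a,b,d}) which is a Fitch map but not a k-restricted Fitch map. Consequently, the class of k-restricted Fitch maps (explained by phylogenetic trees) admits no characterization by a set of forbidden submaps. -/
import Mathlib


/-- A finite rooted phylogenetic tree on leaf set `X`, with vertex type `V`.
Vertices are encoded via a parent function; `par root = root`. -/
structure PhyloTree (V X : Type) : Type where
  fin : Finite V
  root : V
  par : V → V
  par_root : par root = root
  reach : ∀ v : V, ∃ n : ℕ, par^[n] v = root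
  leaf : X → V
  leaf_inj : Function.Injective leaf
  leaf_isLeaf : ∀ (x : X) (u : V), par u = leaf x → u = leaf x
  leaf_only : ∀ v : V, (∀ u : V, par u = v → u = v) → ∃ x : X, leaf x = v
  root_deg : (∃ x : X, leaf x = root) ∨ 2 ≤ {u : V | par u = root ∧ u ≠ root}.ncard
  inner_deg : ∀ v : V, v ≠ root → (¬ ∃ x : X, leaf x = v) →
      2 ≤ {u : V | par u = v ∧ u ≠ v}.ncard

namespace PhyloTree

variable {V X : Type}

/-- `T.anc u v` : `u` is an ancestor of `v`, i.e. `u ⪯_T v`. -/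
def anc (T : PhyloTree V X) (u v : V) : Prop := ∃ n : ℕ, T.par^[n] v = u

/-- `l` is the last common ancestor of `a` and `b`. -/
def IsLca (T : PhyloTree V X) (l a b : V) : Prop :=
  T.anc l a ∧ T.anc l b ∧ ∀ u : V, T.anc u a → T.anc u b → T.anc u l

/-- The cluster of `v`: the set of leaves below `v`. -/
def cluster (T : PhyloTree V X) (v : V) : Set X := {x : X | T.anc v (T.leaf x)}

/-- The cluster set `C(T)`. -/
def clusterSet (T : PhyloTree V X) : Set (Set X) := {S : Set X | ∃ v : V, S = T.cluster v}

/-- The edge `(par u, u)` lies on the descending path from `a` down to `b`. -/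
def edgeOnDown (T : PhyloTree V X) (a b u : V) : Prop :=
  T.anc a u ∧ u ≠ a ∧ T.anc u b

/-- The edge `(par u, u)` lies on the unique path between `v` and `w`. -/
def edgeOnPath (T : PhyloTree V X) (v w u : V) : Prop :=
  ∃ l : V, T.IsLca l v w ∧ (T.edgeOnDown l v u ∨ T.edgeOnDown l w u)

/-- `T` displays the rooted triple `ab|c`. -/
def Displays (T : PhyloTree V X) (a b c : X) : Prop :=
  ∃ l3 l2 : V, T.IsLca l2 (T.leaf a) (T.leaf b) ∧
    T.IsLca l3 l2 (T.leaf c) ∧ l3 ≠ l2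

end PhyloTree

/-- `(T, lab)` explains `ε` : for distinct leaves `x,y`, `m ∈ ε x y` iff there is an
`m`-edge on the path from `lca(x,y)` down to `y`. -/
def Explains {V X M : Type} (T : PhyloTree V X) (lab : V → Set M)
    (ε : X → X → Set M) : Prop :=
  ∀ x y : X, x ≠ y → ∀ m : M,
    (m ∈ ε x y ↔ ∃ l : V, T.IsLca l (T.leaf x) (T.leaf y) ∧
      ∃ u : V, T.edgeOnDown l (T.leaf y) u ∧ m ∈ lab u)

/-- `ε` is a Fitch map: it is explained by some edge-labeled phylogenetic tree. -/
def IsFitchMap {X M : Type} (ε : X → X → Set M) : Prop :=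
  ∃ (V : Type) (T : PhyloTree V X) (lab : V → Set M), Explains T lab ε

/-- The complementary neighborhood `N_{¬m}[y]`. -/
def Nbr {X M : Type} (ε : X → X → Set M) (m : M) (y : X) : Set X :=
  {x : X | x ≠ y ∧ m ∉ ε x y} ∪ {y}

/-- The collection `N[ε]` of all complementary neighborhoods. -/
def NbrSet {X M : Type} (ε : X → X → Set M) : Set (Set X) :=
  {N : Set X | ∃ (m : M) (y : X), N = Nbr ε m y}

/-- A set system is hierarchy-like if any two members intersect in `∅` or one of them. -/
def HLike {X : Type} (H : Set (Set X)) : Prop :=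
  ∀ P ∈ H, ∀ Q ∈ H, P ∩ Q = P ∨ P ∩ Q = Q ∨ P ∩ Q = ∅

/-- The inequality condition (IC). -/
def IneqCond {X M : Type} (ε : X → X → Set M) : Prop :=
  ∀ (m : M) (y y' : X), y' ∈ Nbr ε m y → (Nbr ε m y').ncard ≤ (Nbr ε m y).ncard


/-- `ε` is a `k`-restricted Fitch map. -/
def KRestricted {X M : Type} (ε : X → X → Set M) (k : ℕ) : Prop :=
  ∃ (V : Type) (T : PhyloTree V X) (lab : V → Set M),
    Explains T lab ε ∧ ∀ v : V, v ≠ T.root → (lab v).ncard ≤ k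

/-- The `k`-edge-label condition (`k`-ELC). -/
def KELC {X M : Type} (ε : X → X → Set M) (k : ℕ) : Prop :=
  ∀ N ∈ NbrSet ε, N ≠ (Set.univ : Set X) →
    {m : M | ∃ y : X, N = Nbr ε m y}.ncard ≤ k

/-- `ε` contains `ε₀` as a (not necessarily induced) submap, up to injective renaming
of leaves and colors. -/
def ContainsSubmap {X M X₀ M₀ : Type} (ε : X → X → Set M) (ε₀ : X₀ → X₀ → Set M₀) : Prop :=
  ∃ (f : X₀ → X) (g : M₀ → M), Function.Injective f ∧ Function.Injective g ∧
    ∀ x y : X₀, x ≠ y → ∀ m : M₀, m ∈ ε₀ x y → g m ∈ ε (f x) (f y)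

section GeneralLemmas
namespace PhyloTree
variable {V X : Type} (T : PhyloTree V X)

lemma anc_refl (v : V) : T.anc v v := ⟨0, rfl⟩

lemma anc_trans {u v w : V} (h1 : T.anc u v) (h2 : T.anc v w) : T.anc u w := by
  obtain ⟨n, hn⟩ := h1; obtain ⟨m, hm⟩ := h2
  exact ⟨n + m, by rw [Function.iterate_add_apply, hm, hn]⟩

lemma root_fix (n : ℕ) : T.par^[n] T.root = T.root := by
  induction n with
  | zero => rfl
  | succ n ih => rw [Function.iterate_succ_apply', ih, T.par_root]

lemma anc_root_eq {u : V} (h : T.anc u T.root) : u = T.root := by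
  obtain ⟨n, hn⟩ := h; rw [T.root_fix] at hn; exact hn.symm

lemma anc_antisymm {u v : V} (h1 : T.anc u v) (h2 : T.anc v u) : u = v := by
  obtain ⟨n, hn⟩ := h1; obtain ⟨m, hm⟩ := h2
  rcases Nat.eq_zero_or_pos (m + n) with h | h
  · have : n = 0 := by omega
    subst this; exact hn.symm
  · have hper : T.par^[m + n] v = v := by
      rw [Function.iterate_add_apply, hn, hm]
    have hmul : ∀ t : ℕ, T.par^[(m + n) * t] v = v := by
      intro t
      induction t with
      | zero => rfl
      | succ t ih => rw [Nat.mul_succ, Function.iterate_add_apply, hper, ih]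
    obtain ⟨N, hN⟩ := T.reach v
    have hvr : v = T.root := by
      have h1' : (m + n) * N = ((m + n) * N - N) + N := by
        have := Nat.le_mul_of_pos_left N h
        omega
      have := hmul N
      rw [h1', Function.iterate_add_apply, hN, T.root_fix] at this
      exact this.symm
    subst hvr
    rw [T.root_fix] at hn
    exact hn.symm

lemma anc_comparable {u w v : V} (h1 : T.anc u v) (h2 : T.anc w v) :
    T.anc u w ∨ T.anc w u := by
  obtain ⟨n, hn⟩ := h1; obtain ⟨m, hm⟩ := h2
  rcases le_total n m with h | h
  · right
    refine ⟨m - n, ?_⟩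
    rw [← hn, ← Function.iterate_add_apply, Nat.sub_add_cancel h, hm]
  · left
    refine ⟨n - m, ?_⟩
    rw [← hm, ← Function.iterate_add_apply, Nat.sub_add_cancel h, hn]

lemma anc_leaf_eq {x : X} {w : V} (h : T.anc (T.leaf x) w) : w = T.leaf x := by
  obtain ⟨n, hn⟩ := h
  induction n generalizing w with
  | zero => exact hn
  | succ n ih =>
    rw [Function.iterate_succ_apply'] at hn
    exact ih (T.leaf_isLeaf x _ hn)
lemma lca_unique {l l' a b : V} (h : T.IsLca l a b) (h' : T.IsLca l' a b) : l = l' :=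
  T.anc_antisymm (h'.2.2 l h.1 h.2.1) (h.2.2 l' h'.1 h'.2.1)

lemma exists_child {v w : V} (h : T.anc v w) (hne : v ≠ w) :
    ∃ c, T.par c = v ∧ c ≠ v ∧ T.anc c w := by
  classical
  obtain ⟨n, hn⟩ := h
  have hex : ∃ n, T.par^[n] w = v := ⟨n, hn⟩
  have h0 : Nat.find hex ≠ 0 := by
    intro h0
    have := Nat.find_spec hex
    rw [h0] at this
    exact hne this.symm
  obtain ⟨n', hn'⟩ := Nat.exists_eq_succ_of_ne_zero h0
  refine ⟨T.par^[n'] w, ?_, ?_, ⟨n', rfl⟩⟩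
  · have := Nat.find_spec hex
    rw [hn', Function.iterate_succ_apply'] at this
    exact this
  · intro hc
    exact Nat.find_min hex (by omega : n' < Nat.find hex) hc

lemma exists_leaf_below (v : V) : ∃ x, T.anc v (T.leaf x) := by
  have : Finite V := T.fin
  classical
  have key : ∀ n (v : V), {w | T.anc v w}.ncard ≤ n → ∃ x, T.anc v (T.leaf x) := by
    intro n
    induction n with
    | zero =>
      intro v hv
      exfalso
      have : v ∈ {w | T.anc v w} := T.anc_refl v
      have := Set.ncard_pos (Set.toFinite _) |>.mpr ⟨v, this⟩
      omega
    | succ n ih =>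
      intro v hv
      by_cases hl : ∀ u, T.par u = v → u = v
      · obtain ⟨x, hx⟩ := T.leaf_only v hl
        exact ⟨x, hx ▸ T.anc_refl _⟩
      · push_neg at hl
        obtain ⟨u, hu, hne⟩ := hl
        have hanc : T.anc v u := ⟨1, hu⟩
        have hsub : {w | T.anc u w} ⊆ {w | T.anc v w} := fun w hw => T.anc_trans hanc hw
        have hvnot : v ∉ {w | T.anc u w} := fun hv' => hne (T.anc_antisymm hv' hanc)
        have hlt : {w | T.anc u w}.ncard < {w | T.anc v w}.ncard := by
          refine Set.ncard_lt_ncard ⟨hsub, fun hcon => hvnot (hcon (T.anc_refl v))⟩ (Set.toFinite _)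
        obtain ⟨x, hx⟩ := ih u (by omega)
        exact ⟨x, T.anc_trans hanc hx⟩
  exact key _ v le_rfl

lemma ne_root_of_strict_below {l u : V} (h : T.anc l u) (hne : u ≠ l) : u ≠ T.root := by
  intro hr
  subst hr
  exact hne (T.anc_root_eq h).symm

lemma not_leaf_of_strict_anc {u w : V} (h : T.anc u w) (hne : u ≠ w) :
    ¬ ∃ x, T.leaf x = u := by
  rintro ⟨x, rfl⟩
  exact hne (T.anc_leaf_eq h).symm

lemma sibling_not_anc {u c1 c2 w : V} (hc1 : T.par c1 = u) (hc1ne : c1 ≠ u)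
    (hc2 : T.par c2 = u) (hc2ne : c2 ≠ u) (hdiff : c2 ≠ c1)
    (h1 : T.anc c1 w) (h2 : T.anc c2 w) : False := by
  rcases T.anc_comparable h1 h2 with h | h
  · obtain ⟨n, hn⟩ := h
    match n, hn with
    | 0, hn => exact hdiff hn
    | (n+1), hn =>
      rw [Function.iterate_succ_apply, hc2] at hn
      exact hc1ne (T.anc_antisymm ⟨n, hn⟩ ⟨1, hc1⟩)
  · obtain ⟨n, hn⟩ := h
    match n, hn with
    | 0, hn => exact hdiff hn.symm
    | (n+1), hn =>
      rw [Function.iterate_succ_apply, hc1] at hn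
      exact hc2ne (T.anc_antisymm ⟨n, hn⟩ ⟨1, hc2⟩)

end PhyloTree
end GeneralLemmas
section Construction
variable (k : ℕ)

/-- the 4-leaf example map -/
def epsEx : Fin 4 → Fin 4 → Set (Fin (k + 1)) := fun x y =>
  if y = 3 then (if x = 3 then ∅ else if x = 2 then {m | m ≠ 0} else Set.univ)
  else if y = 2 then (if x = 0 ∨ x = 1 then {(0 : Fin (k+1))} else ∅) else ∅

def fEx : Fin 3 → Fin 4 := fun x => if x = 2 then 3 else ⟨x.val, by omega⟩

def par4 : Fin 6 → Fin 6 := fun v => if v.val < 4 then 0 else 1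

def leaf4 : Fin 4 → Fin 6 := fun x => ⟨x.val + 2, by omega⟩

lemma par4_sq : ∀ v, par4^[2] v = 0 := by decide

def T4 : PhyloTree (Fin 6) (Fin 4) where
  fin := inferInstance
  root := 0
  par := par4
  par_root := rfl
  reach := fun v => ⟨2, par4_sq v⟩
  leaf := leaf4
  leaf_inj := by decide
  leaf_isLeaf := by decide
  leaf_only := by decide
  root_deg := by
    right
    rw [show (2 : ℕ) = 1 + 1 from rfl, Nat.add_one_le_iff,
      Set.one_lt_ncard_iff (Set.toFinite _)]
    exact ⟨1, 2, by decide, by decide, by decide⟩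
  inner_deg := by
    intro v hroot hleaf
    fin_cases v
    · exact absurd rfl hroot
    · rw [show (2 : ℕ) = 1 + 1 from rfl, Nat.add_one_le_iff,
        Set.one_lt_ncard_iff (Set.toFinite _)]
      exact ⟨4, 5, by decide, by decide, by decide⟩
    · exact absurd ⟨0, rfl⟩ hleaf
    · exact absurd ⟨1, rfl⟩ hleaf
    · exact absurd ⟨2, rfl⟩ hleaf
    · exact absurd ⟨3, rfl⟩ hleaf

lemma par4_iter_zero : ∀ n, par4^[n] 0 = 0 := by
  intro n
  induction n with
  | zero => rfl
  | succ n ih => rw [Function.iterate_succ_apply', ih]; rfl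

lemma anc4 : ∀ u v, (T4).anc u v ↔ (u = v ∨ u = par4 v ∨ u = 0) := by
  intro u v
  constructor
  · rintro ⟨n, hn⟩
    rw [show T4.par = par4 from rfl] at hn
    match n, hn with
    | 0, hn => exact Or.inl hn.symm
    | 1, hn => exact Or.inr (Or.inl (by simpa using hn.symm))
    | (n+2), hn =>
      refine Or.inr (Or.inr ?_)
      rw [Function.iterate_add_apply, par4_sq, par4_iter_zero] at hn
      exact hn.symm
  · rintro (rfl | rfl | rfl)
    · exact ⟨0, rfl⟩
    · exact ⟨1, rfl⟩
    · exact ⟨2, par4_sq v⟩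

def lab4 : Fin 6 → Set (Fin (k + 1)) := fun v =>
  if v = 1 then {(0 : Fin (k+1))} else if v = 5 then {m | m ≠ 0} else ∅

lemma mem_lab4 (v : Fin 6) (m : Fin (k+1)) :
    m ∈ lab4 k v ↔ ((v = 1 ∧ m = 0) ∨ (v = 5 ∧ ¬ m = 0)) := by
  unfold lab4
  fin_cases v <;> simp

lemma mem_epsEx (x y : Fin 4) (m : Fin (k+1)) :
    m ∈ epsEx k x y ↔ ((y = 3 ∧ ¬x = 3 ∧ ¬x = 2) ∨ (y = 3 ∧ x = 2 ∧ ¬m = 0) ∨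
      (y = 2 ∧ (x = 0 ∨ x = 1) ∧ m = 0)) := by
  unfold epsEx
  fin_cases x <;> fin_cases y <;> simp

lemma explains4 : Explains T4 (lab4 k) (epsEx k) := by
  intro x y hxy m
  rw [mem_epsEx]
  simp only [PhyloTree.IsLca, PhyloTree.edgeOnDown, anc4, mem_lab4,
    show T4.leaf = leaf4 from rfl]
  by_cases hm : m = 0 <;>
    simp only [hm, eq_self_iff_true, not_true_eq_false, not_false_eq_true, and_true,
      and_false, or_false, false_or, true_and, false_and] <;>
    revert hxy <;>
    fin_cases x <;> fin_cases y <;> decide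
end Construction
section Construction2
variable (k : ℕ)

lemma ncard_ne_zero : ({m : Fin (k+1) | ¬ m = 0}).ncard = k := by
  classical
  rw [Set.ncard_eq_toFinset_card']
  simp [Set.toFinset_setOf, Finset.filter_ne', Finset.card_erase_of_mem]

def par3 : Fin 4 → Fin 4 := fun _ => 0

def leaf3 : Fin 3 → Fin 4 := fun x => ⟨x.val + 1, by omega⟩

def T3 : PhyloTree (Fin 4) (Fin 3) where
  fin := inferInstance
  root := 0
  par := par3
  par_root := rfl
  reach := fun v => ⟨1, rfl⟩
  leaf := leaf3
  leaf_inj := by decide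
  leaf_isLeaf := by decide
  leaf_only := by decide
  root_deg := by
    right
    rw [show (2 : ℕ) = 1 + 1 from rfl, Nat.add_one_le_iff,
      Set.one_lt_ncard_iff (Set.toFinite _)]
    exact ⟨1, 2, by decide, by decide, by decide⟩
  inner_deg := by
    intro v hroot hleaf
    fin_cases v
    · exact absurd rfl hroot
    · exact absurd ⟨0, rfl⟩ hleaf
    · exact absurd ⟨1, rfl⟩ hleaf
    · exact absurd ⟨2, rfl⟩ hleaf

lemma par3_iter : ∀ n v, n ≠ 0 → par3^[n] v = 0 := by
  intro n v hn
  obtain ⟨n', rfl⟩ := Nat.exists_eq_succ_of_ne_zero hn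
  rw [Function.iterate_succ_apply']
  rfl

lemma anc3 : ∀ u v, (T3).anc u v ↔ (u = v ∨ u = 0) := by
  intro u v
  constructor
  · rintro ⟨n, hn⟩
    rcases Nat.eq_zero_or_pos n with rfl | h
    · exact Or.inl hn.symm
    · right
      rw [show T3.par = par3 from rfl, par3_iter n v (by omega)] at hn
      exact hn.symm
  · rintro (rfl | rfl)
    · exact ⟨0, rfl⟩
    · exact ⟨1, rfl⟩

def lab3 : Fin 4 → Set (Fin (k + 1)) := fun v =>
  if v = 3 then Set.univ else ∅

lemma mem_lab3 (v : Fin 4) (m : Fin (k+1)) : m ∈ lab3 k v ↔ v = 3 := by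
  unfold lab3
  fin_cases v <;> simp

lemma explains3 : Explains T3 (lab3 k) (fun x y => epsEx k (fEx x) (fEx y)) := by
  intro x y hxy m
  simp only
  rw [mem_epsEx]
  simp only [PhyloTree.IsLca, PhyloTree.edgeOnDown, anc3, mem_lab3,
    show T3.leaf = leaf3 from rfl]
  by_cases hm : m = 0 <;>
    simp only [hm, eq_self_iff_true, not_true_eq_false, not_false_eq_true, and_true,
      and_false, or_false, false_or, true_and, false_and] <;>
    revert hxy <;>
    fin_cases x <;> fin_cases y <;> decide

end Construction2

section Negative

lemma not_krestricted {k : ℕ} (_hk : 1 ≤ k) (ε' : Fin 3 → Fin 3 → Set (Fin (k+1)))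
    (h02 : ∀ m, m ∈ ε' 0 2) (h12 : ∀ m, m ∈ ε' 1 2) :
    ¬ KRestricted ε' k := by
  classical
  rintro ⟨W, T, lab, hexp, hbound⟩
  have H : ∀ (x : Fin 3), x ≠ 2 → (∀ m, m ∈ ε' x 2) →
      ∀ l : W, T.IsLca l (T.leaf x) (T.leaf 2) →
      ∃ (u : W) (z : Fin 3), T.anc l u ∧ u ≠ l ∧ z ≠ 2 ∧
        T.anc u (T.leaf z) ∧ T.anc u (T.leaf 2) := by
    intro x hxne hx l hl
    have key : ∀ m : Fin (k+1), ∃ u, T.edgeOnDown l (T.leaf 2) u ∧ m ∈ lab u := by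
      intro m
      obtain ⟨l', hl', u, hu, hmu⟩ := (hexp x 2 hxne m).mp (hx m)
      exact ⟨u, (T.lca_unique hl' hl) ▸ hu, hmu⟩
    choose u hu hm using key
    have hune : ∃ m, u m ≠ u 0 := by
      by_contra hc
      push_neg at hc
      have huniv : lab (u 0) = Set.univ := Set.eq_univ_of_forall (fun m => hc m ▸ hm m)
      have hb := hbound (u 0) (T.ne_root_of_strict_below (hu 0).1 (hu 0).2.1)
      rw [huniv, Set.ncard_univ, Nat.card_eq_fintype_card, Fintype.card_fin] at hb
      omega
    obtain ⟨m1, hm1⟩ := hune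
    obtain ⟨uh, ul, hedge, hancul, hnehl⟩ :
        ∃ uh ul, T.edgeOnDown l (T.leaf 2) uh ∧ T.anc uh ul ∧ uh ≠ ul := by
      rcases T.anc_comparable (hu 0).2.2 (hu m1).2.2 with hcomp | hcomp
      · exact ⟨u 0, u m1, hu 0, hcomp, fun h => hm1 h.symm⟩
      · exact ⟨u m1, u 0, hu m1, hcomp, fun h => hm1 h⟩
    have hnotleaf : ¬∃ x0, T.leaf x0 = uh := T.not_leaf_of_strict_anc hancul hnehl
    have hroot : uh ≠ T.root := T.ne_root_of_strict_below hedge.1 hedge.2.1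
    have hdeg := T.inner_deg uh hroot hnotleaf
    obtain ⟨c1, hc1par, hc1ne, hc1anc⟩ :=
      T.exists_child hedge.2.2 (fun h => hnotleaf ⟨2, h.symm⟩)
    obtain ⟨c2, hc2mem, hc2ne⟩ :=
      Set.exists_ne_of_one_lt_ncard (by omega) c1
      (s := {w : W | T.par w = uh ∧ w ≠ uh})
    obtain ⟨z, hz⟩ := T.exists_leaf_below c2
    have hz2 : z ≠ 2 := by
      rintro rfl
      exact T.sibling_not_anc hc1par hc1ne hc2mem.1 hc2mem.2 hc2ne hc1anc hz
    exact ⟨uh, z, hedge.1, hedge.2.1, hz2,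
      T.anc_trans ⟨1, hc2mem.1⟩ hz, hedge.2.2⟩
  obtain ⟨l0, hl0, -⟩ := (hexp 0 2 (by decide) 0).mp (h02 0)
  obtain ⟨l1, hl1, -⟩ := (hexp 1 2 (by decide) 0).mp (h12 0)
  obtain ⟨u, z, hu1, hu2, hz2, hza, hzd⟩ := H 0 (by decide) h02 l0 hl0
  fin_cases z
  · exact hu2 (T.anc_antisymm (hl0.2.2 u hza hzd) hu1)
  · have huL1 : T.anc u l1 := hl1.2.2 u hza hzd
    obtain ⟨v, z', hv1, hv2, hz'2, hz'a, hz'd⟩ := H 1 (by decide) h12 l1 hl1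
    fin_cases z'
    · have hvL0 : T.anc v l0 := hl0.2.2 v hz'a hz'd
      exact hu2 (T.anc_antisymm (T.anc_trans huL1 (T.anc_trans hv1 hvL0)) hu1)
    · exact hv2 (T.anc_antisymm (hl1.2.2 v hz'a hz'd) hv1)
    · exact hz'2 rfl
  · exact hz2 rfl

end Negative
lemma containsSubmap_comp {X M X₀ M₀ : Type} {ε : X → X → Set M}
    {ε' : Fin 3 → Fin 3 → Set M} {f : Fin 3 → X}
    (hf : Function.Injective f) (hfe : ∀ x y, ε' x y = ε (f x) (f y))
    {ε₀ : X₀ → X₀ → Set M₀} (h : ContainsSubmap ε' ε₀) : ContainsSubmap ε ε₀ := by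
  obtain ⟨g1, g2, hg1, hg2, hsub⟩ := h
  refine ⟨f ∘ g1, g2, hf.comp hg1, hg2, fun x y hxy m hm => ?_⟩
  have := hsub x y hxy m hm
  rw [hfe] at this
  exact this


/-- for every `k ≥ 1` there is a `k`-restricted Fitch map on 4 leaves and
`k+1` colors having an induced submap (on 3 leaves) that is a Fitch map but not a
`k`-restricted Fitch map; consequently, `k`-restricted Fitch maps admit no
characterization by forbidden submaps. -/
theorem no_forbidden_submap_characterization (k : ℕ) (hk : 1 ≤ k) :
    (∃ (ε : Fin 4 → Fin 4 → Set (Fin (k + 1))) (f : Fin 3 → Fin 4),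
      Function.Injective f ∧ KRestricted ε k ∧
      IsFitchMap (fun x y => ε (f x) (f y)) ∧
      ¬ KRestricted (fun x y => ε (f x) (f y)) k) ∧
    ¬ ∃ Forb : Set ((n : ℕ) × (c : ℕ) × (Fin n → Fin n → Set (Fin c))),
        ∀ (n c : ℕ) (ε : Fin n → Fin n → Set (Fin c)),
          KRestricted ε k ↔ ∀ F ∈ Forb, ¬ ContainsSubmap ε F.2.2 := by
  have hKR : KRestricted (epsEx k) k := by
    refine ⟨Fin 6, T4, lab4 k, explains4 k, ?_⟩
    intro v hv
    fin_cases v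
    · exact absurd rfl hv
    · show (lab4 k 1).ncard ≤ k
      rw [show lab4 k 1 = {0} from if_pos rfl, Set.ncard_singleton]
      omega
    · simp [lab4, Set.ncard_empty]
    · simp [lab4, Set.ncard_empty]
    · simp [lab4, Set.ncard_empty]
    · show (lab4 k 5).ncard ≤ k
      rw [show lab4 k 5 = {m : Fin (k+1) | ¬ m = 0} from rfl, ncard_ne_zero]
  have hFit : IsFitchMap (fun x y => epsEx k (fEx x) (fEx y)) :=
    ⟨Fin 4, T3, lab3 k, explains3 k⟩
  have h02 : ∀ m, m ∈ epsEx k (fEx 0) (fEx 2) := by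
    intro m
    rw [mem_epsEx]
    exact Or.inl (by decide)
  have h12 : ∀ m, m ∈ epsEx k (fEx 1) (fEx 2) := by
    intro m
    rw [mem_epsEx]
    exact Or.inl (by decide)
  have hNKR : ¬ KRestricted (fun x y => epsEx k (fEx x) (fEx y)) k :=
    not_krestricted hk _ h02 h12
  refine ⟨⟨epsEx k, fEx, by decide, hKR, hFit, hNKR⟩, ?_⟩
  rintro ⟨Forb, hchar⟩
  have h1 := (hchar 4 (k+1) (epsEx k)).mp hKR
  have h2 : ¬ ∀ F ∈ Forb, ¬ ContainsSubmap (fun x y => epsEx k (fEx x) (fEx y)) F.2.2 :=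
    fun h => hNKR ((hchar 3 (k+1) _).mpr h)
  push_neg at h2
  obtain ⟨F, hF, hcont⟩ := h2
  exact h1 F hF (containsSubmap_comp (ε := epsEx k) (f := fEx) (by decide) (fun x y => rfl) hcont)
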